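/- The utility function u_M is super-set monotone: for every budgeting scenario E=(A,V,c,l) and all subsets S' ⊆ S ⊆ A, u_M(S',E) ≤ u_M(S,E). -/
import Mathlib


open Finset

/-- A participatory budgeting scenario `E = (A, V, c, l)`: a finite set of projects,
a finite nonempty family of voters each with an approval set of cost at most the budget. -/
structure Scenario (α ι : Type*) [DecidableEq α] where
  projects : Finset α
  voters : Finset ι
  voters_nonempty : voters.Nonempty
  cost : α → ℕ
  budget : ℕ
  approval : ι → Finset α
  approval_subset : ∀ i ∈ voters, approval i ⊆ projects
  approval_feasible : ∀ i ∈ voters, ∑ a ∈ approval i, cost a ≤ budget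

variable {α ι : Type*} [DecidableEq α]

/-- Appearance rate `r(S,V)`: the fraction of voters whose approval set contains `S`. -/
noncomputable def rate (E : Scenario α ι) (S : Finset α) : ℝ :=
  ((E.voters.filter fun i => S ⊆ E.approval i).card : ℝ) / (E.voters.card : ℝ)

/-- The Möbius transform `m(·,E)`: `m(∅,E) = 0`, `m({a},E) = c(a)` and, for `|S| ≥ 2`,
`m(S,E) = max((r(S,V) - ∏_{a∈S} r({a},V))·c(S), max_{a∈S}(-∑_{C⊊S, a∈C} m(C,E)))`. -/
noncomputable def mobius (E : Scenario α ι) : Finset α → ℝ := fun S =>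
  if h2 : 2 ≤ S.card then
    max ((rate E S - ∏ a ∈ S, rate E {a}) * (∑ a ∈ S, (E.cost a : ℝ)))
      (S.sup' (Finset.card_pos.mp (by omega)) fun a =>
        - ∑ C ∈ (S.powerset.filter fun C => C ≠ S ∧ a ∈ C).attach,
            mobius E C.1)
  else ∑ a ∈ S, (E.cost a : ℝ)
termination_by S => S.card
decreasing_by
  have hC := C.2
  simp only [Finset.mem_filter, Finset.mem_powerset] at hC
  exact Finset.card_lt_card (hC.1.ssubset_of_ne hC.2.1)

/-- The utility function `u_M(S,E) = ∑_{C ⊆ S} m(C,E)`. -/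
noncomputable def uM (E : Scenario α ι) (S : Finset α) : ℝ :=
  ∑ C ∈ S.powerset, mobius E C

lemma mobius_singleton (E : Scenario α ι) (a : α) : mobius E {a} = (E.cost a : ℝ) := by
  rw [mobius]
  simp

lemma key_nonneg (E : Scenario α ι) (T : Finset α) (a : α) (ha : a ∈ T) :
    0 ≤ ∑ C ∈ T.powerset.filter (fun C => a ∈ C), mobius E C := by
  by_cases h2 : 2 ≤ T.card
  · have hTne : T ∉ T.powerset.filter (fun C => C ≠ T ∧ a ∈ C) := by
      simp
    have hset : T.powerset.filter (fun C => a ∈ C)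
        = insert T (T.powerset.filter (fun C => C ≠ T ∧ a ∈ C)) := by
      ext C
      simp only [mem_insert, mem_filter, mem_powerset]
      constructor
      · rintro ⟨hC, haC⟩
        by_cases hCT : C = T
        · exact Or.inl hCT
        · exact Or.inr ⟨hC, hCT, haC⟩
      · rintro (rfl | ⟨hC, _, haC⟩)
        · exact ⟨Subset.refl _, ha⟩
        · exact ⟨hC, haC⟩
    rw [hset, Finset.sum_insert hTne]
    have hm : mobius E T ≥ - ∑ C ∈ T.powerset.filter (fun C => C ≠ T ∧ a ∈ C), mobius E C := by
      rw [mobius, dif_pos h2]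
      refine le_trans ?_ (le_max_right _ _)
      refine le_trans ?_ (Finset.le_sup' _ ha)
      rw [Finset.sum_attach]
    linarith
  · interval_cases h : T.card
    · simp [Finset.card_eq_zero.mp h] at ha
    · obtain ⟨b, rfl⟩ := Finset.card_eq_one.mp h
      simp only [Finset.mem_singleton] at ha
      subst ha
      have : ({a} : Finset α).powerset.filter (fun C => a ∈ C) = {{a}} := by
        ext C
        simp only [mem_filter, mem_powerset, mem_singleton, Finset.subset_singleton_iff]
        constructor
        · rintro ⟨h1 | h1, h2⟩ <;> simp_all
        · rintro rfl; simp
      rw [this, Finset.sum_singleton, mobius_singleton]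
      positivity

lemma uM_insert_le (E : Scenario α ι) (U : Finset α) (a : α) (ha : a ∉ U) :
    uM E U ≤ uM E (insert a U) := by
  unfold uM
  rw [← Finset.sum_filter_add_sum_filter_not ((insert a U).powerset) (fun C => a ∈ C)]
  have h1 : (insert a U).powerset.filter (fun C => ¬ a ∈ C) = U.powerset := by
    ext C
    simp only [mem_filter, mem_powerset, Finset.subset_insert_iff_of_notMem]
    constructor
    · rintro ⟨h1, h2⟩
      intro x hx
      rcases Finset.mem_insert.mp (h1 hx) with rfl | h
      · exact absurd hx h2
      · exact h
    · intro h
      exact ⟨h.trans (Finset.subset_insert _ _), fun hc => ha (h hc)⟩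
  rw [h1]
  have := key_nonneg E (insert a U) a (Finset.mem_insert_self a U)
  linarith

/-- `u_M` is super-set monotone: `u_M(S',E) ≤ u_M(S,E)` whenever `S' ⊆ S ⊆ A`. -/
theorem uM_superset_monotone (E : Scenario α ι) (S' S : Finset α)
    (hsub : S' ⊆ S) (hS : S ⊆ E.projects) :
    uM E S' ≤ uM E S := by
  clear hS
  induction S using Finset.strongInduction with
  | _ S ih =>
    by_cases heq : S' = S
    · exact heq ▸ le_refl _
    · obtain ⟨a, haS, haS'⟩ : ∃ a ∈ S, a ∉ S' := by
        by_contra h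
        push_neg at h
        exact heq (Finset.Subset.antisymm hsub h)
      have h1 : S' ⊆ S.erase a := fun x hx =>
        Finset.mem_erase.mpr ⟨fun hc => haS' (hc ▸ hx), hsub hx⟩
      have h2 : S.erase a ⊂ S := Finset.erase_ssubset haS
      calc uM E S' ≤ uM E (S.erase a) := ih _ h2 h1
        _ ≤ uM E (insert a (S.erase a)) :=
            uM_insert_le E _ a (Finset.notMem_erase a S)
        _ = uM E S := by rw [Finset.insert_erase haS]
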